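/- Let ψ be a permutation-symmetric n-qudit state stabilized by an invertible matrix B (i.e. (B ⊗ B^{-1} ⊗ I^{⊗(n-2)}) ψ = ψ), and let A be an invertible d×d matrix. Then the state A^{⊗n} ψ is stabilized by A B A^{-1}, i.e. ((ABA^{-1}) ⊗ (ABA^{-1})^{-1} ⊗ I^{⊗(n-2)}) A^{⊗n} ψ = A^{⊗n} ψ. -/
import Mathlib


open Matrix BigOperators Polynomial

/-- Permutation symmetry of an `n`-qudit state represented by its amplitudes. -/
def PSym {n d : ℕ} (ψ : (Fin n → Fin d) → ℂ) : Prop :=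
  ∀ σ : Equiv.Perm (Fin n), ∀ x : Fin n → Fin d, ψ (x ∘ σ) = ψ x

/-- The operator `B` acting on the `k`-th tensor factor (identity elsewhere). -/
noncomputable def appAt {n d : ℕ} (k : Fin n) (B : Matrix (Fin d) (Fin d) ℂ)
    (ψ : (Fin n → Fin d) → ℂ) : (Fin n → Fin d) → ℂ :=
  fun x => ∑ j : Fin d, B (x k) j * ψ (Function.update x k j)

/-- The operator `A 1 ⊗ A 2 ⊗ ⋯ ⊗ A n` acting on an `n`-qudit state. -/
noncomputable def appAll {n d : ℕ} (A : Fin n → Matrix (Fin d) (Fin d) ℂ)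
    (ψ : (Fin n → Fin d) → ℂ) : (Fin n → Fin d) → ℂ :=
  fun x => ∑ y : Fin n → Fin d, (∏ k, A k (x k) (y k)) * ψ y

lemma prod_update_left {n d : ℕ} (k : Fin n) (C : Fin n → Matrix (Fin d) (Fin d) ℂ)
    (M : Matrix (Fin d) (Fin d) ℂ) (x y : Fin n → Fin d) :
    ∏ i, Function.update C k M i (x i) (y i)
      = M (x k) (y k) * ∏ i ∈ Finset.univ.erase k, C i (x i) (y i) := by
  rw [← Finset.mul_prod_erase _ _ (Finset.mem_univ k), Function.update_self]
  congr 1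
  exact Finset.prod_congr rfl fun i hi => by
    rw [Function.update_of_ne (Finset.ne_of_mem_erase hi)]

lemma prod_update_arg {n d : ℕ} (k : Fin n) (C : Fin n → Matrix (Fin d) (Fin d) ℂ)
    (x y : Fin n → Fin d) (j : Fin d) :
    ∏ i, C i (x i) ((Function.update y k j) i)
      = C k (x k) j * ∏ i ∈ Finset.univ.erase k, C i (x i) (y i) := by
  rw [← Finset.mul_prod_erase _ _ (Finset.mem_univ k), Function.update_self]
  congr 1
  exact Finset.prod_congr rfl fun i hi => by
    rw [Function.update_of_ne (Finset.ne_of_mem_erase hi)]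

lemma prod_update_arg' {n d : ℕ} (k : Fin n) (C : Fin n → Matrix (Fin d) (Fin d) ℂ)
    (x y : Fin n → Fin d) (j : Fin d) :
    ∏ i, C i ((Function.update x k j) i) (y i)
      = C k j (y k) * ∏ i ∈ Finset.univ.erase k, C i (x i) (y i) := by
  rw [← Finset.mul_prod_erase _ _ (Finset.mem_univ k), Function.update_self]
  congr 1
  exact Finset.prod_congr rfl fun i hi => by
    rw [Function.update_of_ne (Finset.ne_of_mem_erase hi)]

lemma appAt_appAll {n d : ℕ} (k : Fin n) (M : Matrix (Fin d) (Fin d) ℂ)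
    (C : Fin n → Matrix (Fin d) (Fin d) ℂ) (ψ : (Fin n → Fin d) → ℂ) :
    appAt k M (appAll C ψ) = appAll (Function.update C k (M * C k)) ψ := by
  funext x
  simp only [appAt, appAll, Finset.mul_sum]
  rw [Finset.sum_comm]
  refine Finset.sum_congr rfl fun y _ => ?_
  rw [prod_update_left, Matrix.mul_apply, Finset.sum_mul, Finset.sum_mul]
  refine Finset.sum_congr rfl fun j _ => ?_
  rw [prod_update_arg']
  ring

/-- The involution `(y, j) ↦ (update y k j, y k)`. -/
def swapAt {n d : ℕ} (k : Fin n) : ((Fin n → Fin d) × Fin d) ≃ ((Fin n → Fin d) × Fin d) where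
  toFun p := (Function.update p.1 k p.2, p.1 k)
  invFun p := (Function.update p.1 k p.2, p.1 k)
  left_inv p := by simp [Function.update_idem]
  right_inv p := by simp [Function.update_idem]

lemma appAll_appAt {n d : ℕ} (k : Fin n) (N : Matrix (Fin d) (Fin d) ℂ)
    (C : Fin n → Matrix (Fin d) (Fin d) ℂ) (ψ : (Fin n → Fin d) → ℂ) :
    appAll C (appAt k N ψ) = appAll (Function.update C k (C k * N)) ψ := by
  funext x
  simp only [appAt, appAll]
  have lhs : (∑ y : Fin n → Fin d, (∏ i, C i (x i) (y i)) *
        ∑ j : Fin d, N (y k) j * ψ (Function.update y k j))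
      = ∑ p : (Fin n → Fin d) × Fin d,
          (∏ i, C i (x i) (p.1 i)) * (N (p.1 k) p.2 * ψ (Function.update p.1 k p.2)) := by
    rw [Fintype.sum_prod_type]
    exact Finset.sum_congr rfl fun y _ => by rw [Finset.mul_sum]
  have rhs : (∑ y : Fin n → Fin d, (∏ i, Function.update C k (C k * N) i (x i) (y i)) * ψ y)
      = ∑ p : (Fin n → Fin d) × Fin d,
          (C k (x k) p.2 * N p.2 (p.1 k) * ∏ i ∈ Finset.univ.erase k, C i (x i) (p.1 i))
            * ψ p.1 := by
    rw [Fintype.sum_prod_type]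
    refine Finset.sum_congr rfl fun y _ => ?_
    rw [prod_update_left, Matrix.mul_apply, Finset.sum_mul, Finset.sum_mul]
  rw [lhs, rhs, ← Equiv.sum_comp (swapAt k)
    (fun p => (∏ i, C i (x i) (p.1 i)) * (N (p.1 k) p.2 * ψ (Function.update p.1 k p.2)))]
  refine Finset.sum_congr rfl fun p _ => ?_
  simp only [swapAt, Equiv.coe_fn_mk, Function.update_self, Function.update_idem,
    Function.update_eq_self]
  rw [prod_update_arg]
  ring

theorem stmt_11 {n d : ℕ} (hn : 2 ≤ n) (ψ : (Fin n → Fin d) → ℂ) (hψ : PSym ψ)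
    (B A : Matrix (Fin d) (Fin d) ℂ) (hB : IsUnit B.det) (hA : IsUnit A.det)
    (hstab : appAt ⟨0, by omega⟩ B (appAt ⟨1, by omega⟩ B⁻¹ ψ) = ψ) :
    appAt ⟨0, by omega⟩ (A * B * A⁻¹)
        (appAt ⟨1, by omega⟩ (A * B * A⁻¹)⁻¹ (appAll (fun _ => A) ψ)) =
      appAll (fun _ => A) ψ := by
  set k0 : Fin n := ⟨0, by omega⟩
  set k1 : Fin n := ⟨1, by omega⟩
  have hk : k0 ≠ k1 := by simp [k0, k1, Fin.ext_iff]
  have hinv : (A * B * A⁻¹)⁻¹ = A * B⁻¹ * A⁻¹ := by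
    rw [Matrix.mul_inv_rev, Matrix.mul_inv_rev, Matrix.nonsing_inv_nonsing_inv A hA,
      Matrix.mul_assoc]
  have hAiA : A⁻¹ * A = 1 := Matrix.nonsing_inv_mul A hA
  -- LHS
  conv_lhs => rw [hinv, appAt_appAll, appAt_appAll]
  -- RHS
  conv_rhs => rw [← hstab, appAll_appAt, appAll_appAt]
  rw [Function.update_of_ne hk, Function.update_of_ne hk.symm]
  have e1 : A * B * A⁻¹ * A = A * B := by
    rw [Matrix.mul_assoc (A * B) A⁻¹ A, hAiA, Matrix.mul_one]
  have e2 : A * B⁻¹ * A⁻¹ * A = A * B⁻¹ := by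
    rw [Matrix.mul_assoc (A * B⁻¹) A⁻¹ A, hAiA, Matrix.mul_one]
  rw [e1, e2, Function.update_comm hk.symm]
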